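/- Let G be a finite connected graph, and A, B linked, disjoint, saturated subsets of V(G). Then either N(A ∪ B) is a clique, or for every u, v ∈ N(A ∪ B), F(A, {u}) = F(A, {v}) and F(B, {u}) = F(B, {v}). -/

import Mathlib

/-! Saturation makes `A` and `B` monophonically convex and keeps every outside vertex `w` away
from them: no vertex of `A` lies in `cl(B ∪ {w})`, and symmetrically. Joining the ends of an edge
`a₀b₀` between `A` and `B` by a chordless path through `A`, this forces every vertex of `N(A ∪ B)`
to be adjacent to both `a₀` and `b₀`. If `N(A ∪ B)` is not a clique, take non-adjacent `x, y` in
it: then `{x, y}` is a minimal forbidden set (`a₀` and `b₀` lie between `x` and `y`), and short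
induced paths such as `a - u - b₀ - v`, `a - u - x`, `a - x - u`, together with the two clauses
of saturation, show that every `u ∈ N(A ∪ B)` has the same neighbours in `A` as `x`. Swapping `A`
and `B` gives the same for `B`. -/

open Classical

variable {V : Type*}

namespace Paper

def mInterval (G : SimpleGraph V) (u v : V) : Set V :=
  {w | ∃ p : G.Walk u v, p.IsPath ∧ p.toSubgraph.IsInduced ∧ w ∈ p.support}

def MConvex (G : SimpleGraph V) (C : Set V) : Prop :=
  ∀ u ∈ C, ∀ v ∈ C, mInterval G u v ⊆ C

def mHull (G : SimpleGraph V) (X : Set V) : Set V :=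
  ⋂₀ {C | MConvex G C ∧ X ⊆ C}

def mIntervalSet (G : SimpleGraph V) (Z : Set V) : Set V :=
  ⋃ u ∈ Z, ⋃ v ∈ Z, mInterval G u v

def Sep (G : SimpleGraph V) (A B : Set V) : Prop :=
  ∃ H : Set V, MConvex G H ∧ MConvex G Hᶜ ∧ A ⊆ H ∧ B ⊆ Hᶜ

def nbhd (G : SimpleGraph V) (X : Set V) : Set V :=
  {v | v ∉ X ∧ ∃ x ∈ X, G.Adj x v}

def cnbhd (G : SimpleGraph V) (X : Set V) : Set V := X ∪ nbhd G X

def front (G : SimpleGraph V) (X Y : Set V) : Set V := X ∩ cnbhd G Y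

def IsClique (G : SimpleGraph V) (K : Set V) : Prop :=
  ∀ u ∈ K, ∀ v ∈ K, u ≠ v → G.Adj u v

def shadow (G : SimpleGraph V) (A B : Set V) : Set V :=
  {v | (mHull G (B ∪ {v}) ∩ A).Nonempty}

def Forbidden (G : SimpleGraph V) (A B X : Set V) : Prop :=
  X ⊆ (A ∪ B)ᶜ ∧ (mHull G X ∩ A).Nonempty ∧ (mHull G X ∩ B).Nonempty

def MFS (G : SimpleGraph V) (A B : Set V) : Set (Set V) :=
  {X | Forbidden G A B X ∧ ∀ Y, Y ⊂ X → ¬ Forbidden G A B Y}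

def presat (G : SimpleGraph V) (A B : Set V) : Set V :=
  mHull G (shadow G A B ∪ ⋃ X ∈ MFS G A B, ⋂ x ∈ X, mHull G (A ∪ {x}))

def Linked (G : SimpleGraph V) (A B : Set V) : Prop :=
  ∃ a ∈ A, ∃ b ∈ B, G.Adj a b

def Saturated (G : SimpleGraph V) (A B : Set V) : Prop :=
  A = presat G A B ∧ B = presat G B A

def IsCompOf (G : SimpleGraph V) (W S : Set V) : Prop :=
  S.Nonempty ∧ S ⊆ W ∧ (G.induce S).Connected ∧
    ∀ T, S ⊆ T → T ⊆ W → (G.induce T).Connected → T = S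

def Eqv (G : SimpleGraph V) (A B : Set V) (u v : V) : Prop :=
  u = v ∨ ∃ L : List (Set V), L ≠ [] ∧
    (∀ S ∈ L, IsCompOf G (cnbhd G (A ∪ B))ᶜ S) ∧
    List.Chain' (fun S T => (nbhd G S ∩ nbhd G T).Nonempty) L ∧
    (∃ S₀ ∈ L.head?, u ∈ cnbhd G S₀) ∧
    (∃ Sₖ ∈ L.getLast?, v ∈ cnbhd G Sₖ)

end Paper
open Paper


namespace SimpleGraph.Walk

variable {W : Type*} {G : SimpleGraph V} {H : SimpleGraph W}

lemma mk_mem_edges_of_length_eq_one {u v : V} :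
    ∀ {p : G.Walk u v}, p.length = 1 → s(u, v) ∈ p.edges
  | cons _ nil, _ => by simp

lemma isChordless_of_length_eq_dist {u v : V} (p : G.Walk u v) (hp : p.length = G.dist u v) :
    p.IsChordless := by
  have edge_mem {x y : V} (r : G.Walk x y) (hr : r.IsSubwalk p) (hxy : G.Adj x y) :
      s(x, y) ∈ p.edges :=
    hr.edges_subset <| mk_mem_edges_of_length_eq_one <|
      (length_eq_dist_of_subwalk hp hr).trans (dist_eq_one_iff_adj.2 hxy)
  rw [isChordless_iff_forall_mem_edges]
  intro a b ha hb hab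
  have hb' : b ∈ (p.takeUntil a ha).support ∨ b ∈ (p.dropUntil a ha).support := by
    rw [← mem_support_append_iff, take_spec]
    exact hb
  rcases hb' with hb' | hb'
  · rw [Sym2.eq_swap]
    exact edge_mem _ ((isSubwalk_dropUntil _ hb').trans (isSubwalk_takeUntil _ ha)) hab.symm
  · exact edge_mem _ ((isSubwalk_takeUntil _ hb').trans (isSubwalk_dropUntil _ ha)) hab

lemma IsChordless.map (f : H ↪g G) {u v : W} {p : H.Walk u v} (hp : p.IsChordless) :
    (p.map f.toHom).IsChordless := by
  rw [isChordless_iff_forall_mem_edges] at hp ⊢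
  intro a b ha hb hab
  simp only [support_map, List.mem_map] at ha hb
  obtain ⟨a, ha, rfl⟩ := ha
  obtain ⟨b, hb, rfl⟩ := hb
  rw [edges_map]
  exact List.mem_map_of_mem (f := Sym2.map f.toHom) (hp ha hb (f.map_adj_iff.1 hab))

lemma exists_isPath_isChordless {s : Set V} {u v : V} (w : G.Walk u v)
    (hw : ∀ x ∈ w.support, x ∈ s) :
    ∃ p : G.Walk u v, p.IsPath ∧ p.IsChordless ∧ ∀ x ∈ p.support, x ∈ s := by
  obtain ⟨q, hq⟩ := (w.induce s hw).reachable.exists_walk_length_eq_dist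
  refine ⟨q.map (Embedding.induce s).toHom, (q.isPath_of_length_eq_dist hq).map
    Subtype.coe_injective, (q.isChordless_of_length_eq_dist hq).map _, ?_⟩
  intro x hx
  have hx' : x ∈ q.support.map (↑) := q.support_map (Embedding.induce s).toHom ▸ hx
  obtain ⟨x, -, rfl⟩ := List.mem_map.1 hx'
  exact x.2

end SimpleGraph.Walk

namespace Paper

open SimpleGraph Set

variable {G : SimpleGraph V} {A B X : Set V}

lemma subset_mHull (G : SimpleGraph V) (X : Set V) : X ⊆ mHull G X :=
  fun _ hx _ hC => hC.2 hx

lemma mConvex_mHull (G : SimpleGraph V) (X : Set V) : MConvex G (mHull G X) :=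
  fun _ hu _ hv _ hw C hC => hC.1 _ (hu C hC) _ (hv C hC) hw

lemma MConvex.mHull_subset {C : Set V} (hC : MConvex G C) (hX : X ⊆ C) : mHull G X ⊆ C :=
  fun _ hx => hx C ⟨hC, hX⟩

lemma mConvex_singleton (G : SimpleGraph V) (x : V) : MConvex G {x} := by
  rintro u rfl v rfl w ⟨p, hp, -, hw⟩
  rw [(Walk.isPath_iff_nil.1 hp).eq_nil] at hw
  simpa using hw

lemma mem_mHull_of_mem_mInterval {u v w : V} (hu : u ∈ mHull G X) (hv : v ∈ mHull G X)
    (hw : w ∈ mInterval G u v) : w ∈ mHull G X :=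
  mConvex_mHull G X u hu v hv hw

lemma mem_mHull_union_singleton_of_mem_mInterval {a w z : V} (ha : a ∈ A)
    (hz : z ∈ mInterval G a w) : z ∈ mHull G (A ∪ {w}) :=
  mem_mHull_of_mem_mInterval (subset_mHull G _ (Or.inl ha)) (subset_mHull G _ (Or.inr rfl)) hz

lemma mem_mInterval_of_isChordless {u v w : V} {p : G.Walk u v} (hp : p.IsPath)
    (hc : p.IsChordless) (hw : w ∈ p.support) : w ∈ mInterval G u v :=
  ⟨p, hp, Walk.isInduced_toSubgraph.2 hc, hw⟩

lemma mem_mInterval_of_adj_adj {a m b : V} (ham : G.Adj a m) (hmb : G.Adj m b)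
    (hab : ¬ G.Adj a b) (hne : a ≠ b) : m ∈ mInterval G a b := by
  refine mem_mInterval_of_isChordless (p := .cons ham (.cons hmb .nil)) ?_ ?_ (by simp)
  · simp [Walk.isPath_def, ham.ne, hmb.ne, hne]
  · rw [Walk.isChordless_iff_forall_mem_edges]
    simp only [Walk.support_cons, Walk.support_nil, List.mem_cons, List.not_mem_nil,
      or_false, Walk.edges_cons, Walk.edges_nil]
    rintro x y (rfl | rfl | rfl) (rfl | rfl | rfl) hxy <;> simp_all [Sym2.eq_swap, G.adj_comm]

lemma mem_mInterval_of_adj_adj_adj {a u b v : V} (hau : G.Adj a u) (hub : G.Adj u b)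
    (hbv : G.Adj b v) (hab : ¬ G.Adj a b) (hav : ¬ G.Adj a v) (huv : ¬ G.Adj u v)
    (hab' : a ≠ b) (hav' : a ≠ v) (huv' : u ≠ v) : b ∈ mInterval G a v := by
  refine mem_mInterval_of_isChordless (p := .cons hau (.cons hub (.cons hbv .nil))) ?_ ?_
    (by simp)
  · simp [Walk.isPath_def, hau.ne, hub.ne, hbv.ne, hab', hav', huv']
  · rw [Walk.isChordless_iff_forall_mem_edges]
    simp only [Walk.support_cons, Walk.support_nil, List.mem_cons, List.not_mem_nil,
      or_false, Walk.edges_cons, Walk.edges_nil]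
    rintro x y (rfl | rfl | rfl | rfl) (rfl | rfl | rfl | rfl) hxy <;>
      simp_all [Sym2.eq_swap, G.adj_comm]

lemma mem_mHull_pair_of_adj_adj {x m y : V} (hxm : G.Adj x m) (hmy : G.Adj m y)
    (hxy : ¬ G.Adj x y) (hne : x ≠ y) : m ∈ mHull G {x, y} :=
  mem_mHull_of_mem_mInterval (subset_mHull G _ (Or.inl rfl)) (subset_mHull G _ (Or.inr rfl))
    (mem_mInterval_of_adj_adj hxm hmy hxy hne)

lemma pair_mem_MFS_of_forbidden {x y : V} (hF : Forbidden G A B {x, y}) (hxA : x ∉ A)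
    (hyA : y ∉ A) : {x, y} ∈ MFS G A B := by
  refine ⟨hF, fun Y hY ⟨_, ⟨z, hzY, hzA⟩, _⟩ => ?_⟩
  have not_subset_singleton : ∀ t ∉ A, Y ⊆ {t} → False := fun t ht hYt =>
    ht (((mConvex_singleton G t).mHull_subset hYt hzY : z = t) ▸ hzA)
  rcases subset_pair_iff_eq.1 hY.subset with rfl | rfl | rfl | rfl
  · exact not_subset_singleton x hxA (empty_subset _)
  · exact not_subset_singleton x hxA subset_rfl
  · exact not_subset_singleton y hyA subset_rfl
  · exact hY.ne rfl

namespace Saturated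

lemma symm (hS : Saturated G A B) : Saturated G B A := ⟨hS.2, hS.1⟩

lemma mConvex (hS : Saturated G A B) : MConvex G A := by
  rw [hS.1]
  exact mConvex_mHull G _

lemma mem_of_mem_mHull (hS : Saturated G A B) {w z : V} (hz : z ∈ mHull G (B ∪ {w}))
    (hzA : z ∈ A) : w ∈ A := by
  rw [hS.1]
  exact subset_mHull G _ (Or.inl ⟨z, hz, hzA⟩)

lemma mem_of_mem_MFS (hS : Saturated G A B) {X : Set V} (hX : X ∈ MFS G A B) {z : V}
    (hz : ∀ x ∈ X, z ∈ mHull G (A ∪ {x})) : z ∈ A := by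
  rw [hS.1]
  exact subset_mHull G _ (Or.inr (mem_iUnion₂.2 ⟨X, hX, mem_iInter₂.2 hz⟩))

lemma adj_right_of_adj_left (hG : G.Connected) (hS : Saturated G A B) {a b x u : V}
    (ha : a ∈ A) (hb : b ∈ B) (hab : G.Adj a b) (hx : x ∈ A) (hxu : G.Adj x u)
    (huA : u ∉ A) (hub : u ≠ b) : G.Adj u b := by
  -- otherwise a chordless `b`-`u` path through `A ∪ {b, u}` has its second vertex in
  -- `A ∩ cl(B ∪ {u})`
  by_contra hnub
  obtain ⟨p, hp, hpc, -⟩ :=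
    (hG.preconnected a x).some.exists_isPath_isChordless (s := univ) fun _ _ => trivial
  have hp_sub : ∀ z ∈ p.support, z ∈ A := fun z hz =>
    hS.mConvex a ha x hx (mem_mInterval_of_isChordless hp hpc hz)
  let w : G.Walk b u := .cons hab.symm (p.concat hxu)
  have hw : ∀ z ∈ w.support, z ∈ insert b (insert u A) := by
    simp only [w, Walk.support_cons, Walk.support_concat, List.mem_cons, List.mem_append,
      List.not_mem_nil, or_false]
    rintro z (rfl | hz | rfl)
    · exact mem_insert _ _
    · exact mem_insert_of_mem _ (mem_insert_of_mem _ (hp_sub z hz))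
    · exact mem_insert_of_mem _ (mem_insert _ _)
  obtain ⟨q, hq, hqc, hq_sub⟩ := w.exists_isPath_isChordless hw
  cases q with
  | nil => exact hub rfl
  | @cons _ c _ hbc q' =>
    have hc : c ∈ q'.support := q'.start_mem_support
    have hcA : c ∈ A := by
      rcases hq_sub c (List.mem_cons_of_mem _ hc) with rfl | rfl | hcA
      · exact absurd rfl hbc.ne
      · exact absurd hbc.symm hnub
      · exact hcA
    refine huA (hS.mem_of_mem_mHull ?_ hcA)
    exact mem_mHull_union_singleton_of_mem_mInterval hb
      (mem_mInterval_of_isChordless hq hqc (List.mem_cons_of_mem _ hc))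

lemma adj_left_of_adj_right (hS : Saturated G A B) {a b u : V} (ha : a ∈ A) (hb : b ∈ B)
    (hab : G.Adj a b) (hub : G.Adj u b) (huA : u ∉ A) (huB : u ∉ B) : G.Adj u a := by
  by_contra hua
  have hbH : b ∈ mHull G (A ∪ {u}) := mem_mHull_union_singleton_of_mem_mInterval ha
    (mem_mInterval_of_adj_adj hab hub.symm (fun h => hua h.symm) (fun h => huA (h ▸ ha)))
  exact huB (hS.symm.mem_of_mem_mHull hbH hb)

lemma adj_of_mem_nbhd (hG : G.Connected) (hS : Saturated G A B) {a b u : V} (ha : a ∈ A)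
    (hb : b ∈ B) (hab : G.Adj a b) (hu : u ∈ nbhd G (A ∪ B)) : G.Adj u a ∧ G.Adj u b := by
  obtain ⟨huAB, x, hx | hx, hxu⟩ := hu
  · have hub := hS.adj_right_of_adj_left hG ha hb hab hx hxu (fun h => huAB (Or.inl h))
      (fun h => huAB (Or.inr (h ▸ hb)))
    exact ⟨hS.adj_left_of_adj_right ha hb hab hub (fun h => huAB (Or.inl h))
      (fun h => huAB (Or.inr h)), hub⟩
  · have hua := hS.symm.adj_right_of_adj_left hG hb ha hab.symm hx hxu (fun h => huAB (Or.inr h))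
      (fun h => huAB (Or.inl (h ▸ ha)))
    exact ⟨hua, hS.symm.adj_left_of_adj_right hb ha hab.symm hua (fun h => huAB (Or.inr h))
      (fun h => huAB (Or.inl h))⟩

lemma adj_of_adj_of_not_adj (hG : G.Connected) (hS : Saturated G A B) (hd : Disjoint A B)
    {a₀ b₀ : V} (ha₀ : a₀ ∈ A) (hb₀ : b₀ ∈ B) (hab₀ : G.Adj a₀ b₀) {u v : V}
    (hu : u ∈ nbhd G (A ∪ B)) (hv : v ∈ nbhd G (A ∪ B)) (huv : ¬ G.Adj u v) {a : V}
    (ha : a ∈ A) (hau : G.Adj a u) : G.Adj a v := by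
  by_contra hav
  by_cases hab : G.Adj a b₀
  · exact hav (hS.adj_of_mem_nbhd hG ha hb₀ hab hv).1.symm
  have hub₀ := (hS.adj_of_mem_nbhd hG ha₀ hb₀ hab₀ hu).2
  have hvb₀ := (hS.adj_of_mem_nbhd hG ha₀ hb₀ hab₀ hv).2
  have hb₀H : b₀ ∈ mHull G (A ∪ {v}) := mem_mHull_union_singleton_of_mem_mInterval ha
    (mem_mInterval_of_adj_adj_adj hau hub₀ hvb₀.symm hab hav huv
      (fun h => disjoint_left.1 hd ha (h ▸ hb₀)) (fun h => hv.1 (Or.inl (h ▸ ha)))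
      (fun h => hav (h ▸ hau)))
  exact hv.1 (Or.inr (hS.symm.mem_of_mem_mHull hb₀H hb₀))

lemma pair_mem_MFS (hG : G.Connected) (hS : Saturated G A B) {a₀ b₀ : V} (ha₀ : a₀ ∈ A)
    (hb₀ : b₀ ∈ B) (hab₀ : G.Adj a₀ b₀) {x y : V} (hx : x ∈ nbhd G (A ∪ B))
    (hy : y ∈ nbhd G (A ∪ B)) (hxy : x ≠ y) (hnxy : ¬ G.Adj x y) : {x, y} ∈ MFS G A B := by
  have hxN := hS.adj_of_mem_nbhd hG ha₀ hb₀ hab₀ hx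
  have hyN := hS.adj_of_mem_nbhd hG ha₀ hb₀ hab₀ hy
  refine pair_mem_MFS_of_forbidden ⟨?_, ⟨a₀, ?_, ha₀⟩, ⟨b₀, ?_, hb₀⟩⟩
    (fun h => hx.1 (Or.inl h)) (fun h => hy.1 (Or.inl h))
  · rintro t (rfl | rfl)
    exacts [hx.1, hy.1]
  · exact mem_mHull_pair_of_adj_adj hxN.1 hyN.1.symm hnxy hxy
  · exact mem_mHull_pair_of_adj_adj hxN.2 hyN.2.symm hnxy hxy

lemma adj_fst_of_adj (hG : G.Connected) (hS : Saturated G A B) (hd : Disjoint A B)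
    {a₀ b₀ : V} (ha₀ : a₀ ∈ A) (hb₀ : b₀ ∈ B) (hab₀ : G.Adj a₀ b₀) {x y : V}
    (hx : x ∈ nbhd G (A ∪ B)) (hy : y ∈ nbhd G (A ∪ B)) (hxy : x ≠ y)
    (hnxy : ¬ G.Adj x y) {u a : V} (hu : u ∈ nbhd G (A ∪ B)) (ha : a ∈ A)
    (hau : G.Adj a u) : G.Adj a x := by
  have transfer {v w c : V} (hv : v ∈ nbhd G (A ∪ B)) (hw : w ∈ nbhd G (A ∪ B))
      (hvw : ¬ G.Adj v w) (hc : c ∈ A) : G.Adj c v → G.Adj c w :=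
    hS.adj_of_adj_of_not_adj hG hd ha₀ hb₀ hab₀ hv hw hvw hc
  have hyx : ¬ G.Adj y x := fun h => hnxy h.symm
  by_cases hux : G.Adj u x
  swap
  · exact transfer hu hx hux ha hau
  by_cases huy : G.Adj u y
  swap
  · exact transfer hy hx hyx ha (transfer hu hy huy ha hau)
  -- otherwise `u` lies in both `cl(A ∪ {x})` and `cl(A ∪ {y})`, and `{x, y}` is an MFS
  by_contra hax
  have hay : ¬ G.Adj a y := fun hay => hax (transfer hy hx hyx ha hay)
  refine hu.1 (Or.inl (hS.mem_of_mem_MFS (hS.pair_mem_MFS hG ha₀ hb₀ hab₀ hx hy hxy hnxy) ?_))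
  rintro t (rfl | rfl)
  · exact mem_mHull_union_singleton_of_mem_mInterval ha
      (mem_mInterval_of_adj_adj hau hux hax fun h => hx.1 (Or.inl (h ▸ ha)))
  · exact mem_mHull_union_singleton_of_mem_mInterval ha
      (mem_mInterval_of_adj_adj hau huy hay fun h => hy.1 (Or.inl (h ▸ ha)))

lemma adj_of_adj_fst (hG : G.Connected) (hS : Saturated G A B) (hd : Disjoint A B)
    {a₀ b₀ : V} (ha₀ : a₀ ∈ A) (hb₀ : b₀ ∈ B) (hab₀ : G.Adj a₀ b₀) {x y : V}
    (hx : x ∈ nbhd G (A ∪ B)) (hy : y ∈ nbhd G (A ∪ B)) (hxy : x ≠ y)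
    (hnxy : ¬ G.Adj x y) {u a : V} (hu : u ∈ nbhd G (A ∪ B)) (ha : a ∈ A)
    (hax : G.Adj a x) : G.Adj a u := by
  have transfer {v w c : V} (hv : v ∈ nbhd G (A ∪ B)) (hw : w ∈ nbhd G (A ∪ B))
      (hvw : ¬ G.Adj v w) (hc : c ∈ A) : G.Adj c v → G.Adj c w :=
    hS.adj_of_adj_of_not_adj hG hd ha₀ hb₀ hab₀ hv hw hvw hc
  by_cases hux : G.Adj u x
  swap
  · exact transfer hx hu (fun h => hux h.symm) ha hax
  have hay := transfer hx hy hnxy ha hax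
  by_cases huy : G.Adj u y
  swap
  · exact transfer hy hu (fun h => huy h.symm) ha hay
  -- otherwise `x, y ∈ cl(A ∪ {u})`, hence so is their common neighbour `b₀`
  by_contra hau
  have hau' : a ≠ u := fun h => hu.1 (Or.inl (h ▸ ha))
  have hxH := mem_mHull_union_singleton_of_mem_mInterval ha
    (mem_mInterval_of_adj_adj hax hux.symm hau hau')
  have hyH := mem_mHull_union_singleton_of_mem_mInterval ha
    (mem_mInterval_of_adj_adj hay huy.symm hau hau')
  have hb₀H : b₀ ∈ mHull G (A ∪ {u}) := mem_mHull_of_mem_mInterval hxH hyH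
    (mem_mInterval_of_adj_adj (hS.adj_of_mem_nbhd hG ha₀ hb₀ hab₀ hx).2
      (hS.adj_of_mem_nbhd hG ha₀ hb₀ hab₀ hy).2.symm hnxy hxy)
  exact hu.1 (Or.inr (hS.symm.mem_of_mem_mHull hb₀H hb₀))

lemma inter_neighborSet_eq (hG : G.Connected) (hS : Saturated G A B) (hd : Disjoint A B)
    {a₀ b₀ : V} (ha₀ : a₀ ∈ A) (hb₀ : b₀ ∈ B) (hab₀ : G.Adj a₀ b₀) {x y : V}
    (hx : x ∈ nbhd G (A ∪ B)) (hy : y ∈ nbhd G (A ∪ B)) (hxy : x ≠ y)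
    (hnxy : ¬ G.Adj x y) :
    ∀ u ∈ nbhd G (A ∪ B), A ∩ G.neighborSet u = A ∩ G.neighborSet x := by
  intro u hu
  ext a
  simp only [mem_inter_iff, SimpleGraph.mem_neighborSet]
  exact and_congr_right fun ha =>
    ⟨fun h => (hS.adj_fst_of_adj hG hd ha₀ hb₀ hab₀ hx hy hxy hnxy hu ha h.symm).symm,
      fun h => (hS.adj_of_adj_fst hG hd ha₀ hb₀ hab₀ hx hy hxy hnxy hu ha h.symm).symm⟩

end Saturated

end Paper

theorem stmt_12_general (G : SimpleGraph V) (hG : G.Connected)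
    (A B : Set V) (hL : Linked G A B) (hd : Disjoint A B)
    (hS : Saturated G A B) :
    IsClique G (nbhd G (A ∪ B)) ∨
      ∀ u ∈ nbhd G (A ∪ B), ∀ v ∈ nbhd G (A ∪ B),
        A ∩ G.neighborSet u = A ∩ G.neighborSet v ∧
        B ∩ G.neighborSet u = B ∩ G.neighborSet v := by
  obtain ⟨a₀, ha₀, b₀, hb₀, hab₀⟩ := hL
  by_cases hK : IsClique G (nbhd G (A ∪ B))
  · exact Or.inl hK
  obtain ⟨x, hx, y, hy, hxy, hnxy⟩ : ∃ x ∈ nbhd G (A ∪ B), ∃ y ∈ nbhd G (A ∪ B),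
      x ≠ y ∧ ¬ G.Adj x y := by
    simpa [IsClique] using hK
  have hBA : nbhd G (B ∪ A) = nbhd G (A ∪ B) := by rw [Set.union_comm]
  have hA := hS.inter_neighborSet_eq hG hd ha₀ hb₀ hab₀ hx hy hxy hnxy
  have hB := hS.symm.inter_neighborSet_eq hG hd.symm hb₀ ha₀ hab₀.symm
    (hBA ▸ hx) (hBA ▸ hy) hxy hnxy
  rw [hBA] at hB
  exact Or.inr fun u hu v hv => ⟨by rw [hA u hu, hA v hv], by rw [hB u hu, hB v hv]⟩

theorem stmt_12 [Fintype V] (G : SimpleGraph V) (hG : G.Connected)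
    (A B : Set V) (hL : Linked G A B) (hd : Disjoint A B)
    (hS : Saturated G A B) :
    IsClique G (nbhd G (A ∪ B)) ∨
      ∀ u ∈ nbhd G (A ∪ B), ∀ v ∈ nbhd G (A ∪ B),
        A ∩ G.neighborSet u = A ∩ G.neighborSet v ∧
        B ∩ G.neighborSet u = B ∩ G.neighborSet v :=
  stmt_12_general G hG A B hL hd hS
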